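/- arXiv:1910.00792 — 4 statements merged into one kernel-verified Lean document; each statement's English description precedes it below -/
import Mathlib

section
/- Let (X, d, μ) be a probability space with a measure-preserving flow Φ_t, and let g₁, g₂ be bounded measurable mean-zero functions. Then lim_{T→∞} (1/T) ∫_X (∫_0^T g₁(Φ_s x) ds)(∫_0^T g₂(Φ_s x) ds) dμ(x) = lim_{T→∞} ∫_X g₁(x) (∫_{-T/2}^{T/2} g₂(Φ_s x) ds) dμ(x), provided both limits exist. -/
/-!
With the correlation function `ρ t = ∫ g₁ · (g₂ ∘ Φ t) dμ`, invariance of `μ` gives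
`∫ (g₁ ∘ Φ s) (g₂ ∘ Φ u) dμ = ρ (u - s)`, so by Fubini the first expression is
`T⁻¹ ∫₀ᵀ ∫₀ᵀ ρ (u - s) du ds = T⁻¹ ∫₀ᵀ R t dt` with `R t = ∫_{-t}^{t} ρ`, while the second one
is `R (T / 2)`. Hence the first limit is the Cesàro limit of `R`, which equals `lim R = L₂`.
-/

open MeasureTheory Filter Topology Asymptotics

section RealLine
variable {E : Type*} [NormedAddCommGroup E] [NormedSpace ℝ E] {f : ℝ → E}

theorem intervalIntegral_isLittleO_id_of_tendsto_zero (hf : ∀ a b, IntervalIntegrable f volume a b)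
    (hlim : Tendsto f atTop (𝓝 0)) :
    (fun T => ∫ t in (0 : ℝ)..T, f t) =o[atTop] id := by
  refine isLittleO_iff.2 fun c hc => ?_
  obtain ⟨M, hM⟩ := eventually_atTop.1 <|
    ((tendsto_norm_zero.comp hlim).eventually (ge_mem_nhds (half_pos hc))).and
      (eventually_ge_atTop 0)
  have hM0 : 0 ≤ M := (hM M le_rfl).2
  set A := ‖∫ t in (0 : ℝ)..M, f t‖
  filter_upwards [eventually_ge_atTop (max M (2 * A / c))] with T hT
  have hMT : M ≤ T := le_of_max_le_left hT
  have hAT : 2 * A ≤ T * c := (div_le_iff₀ hc).1 (le_of_max_le_right hT)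
  have htail : ‖∫ t in M..T, f t‖ ≤ c / 2 * |T - M| :=
    intervalIntegral.norm_integral_le_of_norm_le_const fun t ht =>
      (hM t (by rw [Set.uIoc_of_le hMT] at ht; exact ht.1.le)).1
  calc ‖∫ t in (0 : ℝ)..T, f t‖
      = ‖(∫ t in (0 : ℝ)..M, f t) + ∫ t in M..T, f t‖ := by
        rw [intervalIntegral.integral_add_adjacent_intervals (hf 0 M) (hf M T)]
    _ ≤ A + c / 2 * |T - M| := (norm_add_le _ _).trans (add_le_add_right htail A)
    _ ≤ c * ‖id T‖ := by
        rw [id, Real.norm_eq_abs, abs_of_nonneg (by linarith), abs_of_nonneg (by linarith)]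
        nlinarith

theorem tendsto_inv_smul_intervalIntegral_of_tendsto [CompleteSpace E]
    (hf : ∀ a b, IntervalIntegrable f volume a b) {L : E} (hlim : Tendsto f atTop (𝓝 L)) :
    Tendsto (fun T => T⁻¹ • ∫ t in (0 : ℝ)..T, f t) atTop (𝓝 L) := by
  have hsub : ∀ a b, IntervalIntegrable (fun t => f t - L) volume a b :=
    fun a b => (hf a b).sub intervalIntegrable_const
  have hsmall := (intervalIntegral_isLittleO_id_of_tendsto_zero hsub
    (by simpa using hlim.sub_const L)).tendsto_inv_smul_nhds_zero
  rw [← zero_add L]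
  refine (hsmall.add_const L).congr' ?_
  filter_upwards [eventually_gt_atTop 0] with T hT
  rw [id, intervalIntegral.integral_sub (hf 0 T) intervalIntegrable_const,
    intervalIntegral.integral_const, smul_sub, sub_zero, inv_smul_smul₀ hT.ne', sub_add_cancel]

theorem continuous_intervalIntegral_neg_self (hf : ∀ a b, IntervalIntegrable f volume a b) :
    Continuous fun t => ∫ r in -t..t, f r := by
  have hP := intervalIntegral.continuous_primitive hf 0
  convert hP.sub (hP.comp continuous_neg) using 1
  funext t
  exact (intervalIntegral.integral_interval_sub_left (hf 0 t) (hf 0 (-t))).symm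

theorem intervalIntegral_intervalIntegral_comp_sub
    (hf : ∀ a b, IntervalIntegrable f volume a b) (T : ℝ) :
    ∫ s in (0 : ℝ)..T, ∫ u in (0 : ℝ)..T, f (u - s) = ∫ t in (0 : ℝ)..T, ∫ r in -t..t, f r := by
  set P : ℝ → E := fun t => ∫ r in (0 : ℝ)..t, f r
  have hP : Continuous P := intervalIntegral.continuous_primitive hf 0
  have hP_neg : Continuous fun s => P (-s) := hP.comp continuous_neg
  have hdiff : ∀ a b, ∫ r in a..b, f r = P b - P a := fun a b =>
    (intervalIntegral.integral_interval_sub_left (hf 0 b) (hf 0 a)).symm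
  calc ∫ s in (0 : ℝ)..T, ∫ u in (0 : ℝ)..T, f (u - s)
      = ∫ s in (0 : ℝ)..T, (P (T - s) - P (-s)) := by
        congr 1; funext s
        rw [intervalIntegral.integral_comp_sub_right f s, hdiff, zero_sub]
    _ = (∫ s in (0 : ℝ)..T, P (T - s)) - ∫ s in (0 : ℝ)..T, P (-s) :=
        intervalIntegral.integral_sub
          ((hP.comp (continuous_sub_left T)).intervalIntegrable 0 T)
          (hP_neg.intervalIntegrable 0 T)
    _ = (∫ t in (0 : ℝ)..T, P t) - ∫ t in (0 : ℝ)..T, P (-t) := by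
        rw [intervalIntegral.integral_comp_sub_left P T, sub_self, sub_zero]
    _ = ∫ t in (0 : ℝ)..T, ∫ r in -t..t, f r := by
        rw [← intervalIntegral.integral_sub (hP.intervalIntegrable 0 T)
          (hP_neg.intervalIntegrable 0 T)]
        simp only [hdiff]
end RealLine


theorem abs_mul_le_of_abs_le {a b C : ℝ} (ha : |a| ≤ C) (hb : |b| ≤ C) : |a * b| ≤ C * C := by
  rw [abs_mul]
  exact mul_le_mul ha hb (abs_nonneg b) ((abs_nonneg a).trans ha)

section Flow
variable {X : Type*} [MeasurableSpace X] {μ : Measure X} {Φ : ℝ → X → X} {g₁ g₂ : X → ℝ}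

variable (μ Φ g₁ g₂) in
noncomputable def flowCorrelation (t : ℝ) : ℝ := ∫ x, g₁ x * g₂ (Φ t x) ∂μ

theorem integral_comp_mul_comp_eq_flowCorrelation (hΦadd : ∀ t s x, Φ (t + s) x = Φ t (Φ s x))
    (hΦpres : ∀ t, MeasurePreserving (Φ t) μ μ) (hg₁ : Measurable g₁) (hg₂ : Measurable g₂)
    (s u : ℝ) : ∫ x, g₁ (Φ s x) * g₂ (Φ u x) ∂μ = flowCorrelation μ Φ g₁ g₂ (u - s) := by
  have hmeas : Measurable fun y => g₁ y * g₂ (Φ (u - s) y) :=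
    hg₁.mul (hg₂.comp (hΦpres (u - s)).measurable)
  have hmap := integral_map (μ := μ) (hΦpres s).measurable.aemeasurable
    (by rw [(hΦpres s).map_eq]; exact hmeas.aestronglyMeasurable)
  rw [(hΦpres s).map_eq] at hmap
  refine Eq.trans ?_ hmap.symm
  simp only [← hΦadd, sub_add_cancel]

theorem measurable_flowCorrelation [SFinite μ] (hΦmeas : Measurable fun p : ℝ × X => Φ p.1 p.2)
    (hg₁ : Measurable g₁) (hg₂ : Measurable g₂) : Measurable (flowCorrelation μ Φ g₁ g₂) :=
  ((hg₁.comp measurable_snd).mul (hg₂.comp hΦmeas)).stronglyMeasurable.integral_prod_right'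
    |>.measurable

theorem abs_flowCorrelation_le [IsProbabilityMeasure μ] {C : ℝ} (hb₁ : ∀ x, |g₁ x| ≤ C)
    (hb₂ : ∀ x, |g₂ x| ≤ C) (t : ℝ) : |flowCorrelation μ Φ g₁ g₂ t| ≤ C * C := by
  simpa [flowCorrelation] using
    norm_integral_le_of_norm_le_const (μ := μ) (f := fun x => g₁ x * g₂ (Φ t x))
    (ae_of_all _ fun x => abs_mul_le_of_abs_le (hb₁ x) (hb₂ (Φ t x)))

theorem intervalIntegrable_flowCorrelation [IsProbabilityMeasure μ]
    (hΦmeas : Measurable fun p : ℝ × X => Φ p.1 p.2) (hg₁ : Measurable g₁) (hg₂ : Measurable g₂)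
    {C : ℝ} (hb₁ : ∀ x, |g₁ x| ≤ C) (hb₂ : ∀ x, |g₂ x| ≤ C) (a b : ℝ) :
    IntervalIntegrable (flowCorrelation μ Φ g₁ g₂) volume a b :=
  (intervalIntegrable_iff.2 <| IntegrableOn.of_bound measure_Ioc_lt_top
    (measurable_flowCorrelation hΦmeas hg₁ hg₂).aestronglyMeasurable (C * C)
    (ae_of_all _ (abs_flowCorrelation_le hb₁ hb₂)))

theorem integral_mul_intervalIntegral_comp_eq [IsProbabilityMeasure μ]
    (hΦmeas : Measurable fun p : ℝ × X => Φ p.1 p.2) (hg₁ : Measurable g₁) (hg₂ : Measurable g₂)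
    {C : ℝ} (hb₁ : ∀ x, |g₁ x| ≤ C) (hb₂ : ∀ x, |g₂ x| ≤ C) (a b : ℝ) :
    ∫ x, g₁ x * (∫ s in a..b, g₂ (Φ s x)) ∂μ = ∫ s in a..b, flowCorrelation μ Φ g₁ g₂ s := by
  have : IsFiniteMeasure (volume.restrict (Set.uIoc a b)) :=
    isFiniteMeasure_restrict.2 measure_Ioc_lt_top.ne
  have hint : Integrable (Function.uncurry fun s x => g₁ x * g₂ (Φ s x))
      ((volume.restrict (Set.uIoc a b)).prod μ) :=
    .of_bound ((hg₁.comp measurable_snd).mul (hg₂.comp hΦmeas)).aestronglyMeasurable (C * C)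
      (ae_of_all _ fun p => abs_mul_le_of_abs_le (hb₁ p.2) (hb₂ _))
  simp only [flowCorrelation, intervalIntegral_integral_swap hint,
    intervalIntegral.integral_const_mul]

theorem integral_intervalIntegral_mul_intervalIntegral_comp_eq [IsProbabilityMeasure μ]
    (hΦadd : ∀ t s x, Φ (t + s) x = Φ t (Φ s x))
    (hΦmeas : Measurable fun p : ℝ × X => Φ p.1 p.2) (hΦpres : ∀ t, MeasurePreserving (Φ t) μ μ)
    (hg₁ : Measurable g₁) (hg₂ : Measurable g₂)
    {C : ℝ} (hb₁ : ∀ x, |g₁ x| ≤ C) (hb₂ : ∀ x, |g₂ x| ≤ C) {a b : ℝ} (hab : a ≤ b) :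
    ∫ x, (∫ s in a..b, g₁ (Φ s x)) * (∫ u in a..b, g₂ (Φ u x)) ∂μ
      = ∫ s in a..b, ∫ u in a..b, flowCorrelation μ Φ g₁ g₂ (u - s) := by
  have : IsFiniteMeasure (volume.restrict (Set.Ioc a b)) :=
    isFiniteMeasure_restrict.2 measure_Ioc_lt_top.ne
  set ν := (volume.restrict (Set.Ioc a b)).prod (volume.restrict (Set.Ioc a b))
  have hint : Integrable (Function.uncurry fun x (p : ℝ × ℝ) => g₁ (Φ p.1 x) * g₂ (Φ p.2 x))
      (μ.prod ν) :=
    .of_bound ((hg₁.comp (hΦmeas.comp (measurable_snd.fst.prodMk measurable_fst))).mul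
        (hg₂.comp (hΦmeas.comp (measurable_snd.snd.prodMk measurable_fst)))).aestronglyMeasurable
      (C * C) (ae_of_all _ fun q => abs_mul_le_of_abs_le (hb₁ _) (hb₂ _))
  have hint_corr : Integrable (fun p : ℝ × ℝ => flowCorrelation μ Φ g₁ g₂ (p.2 - p.1)) ν :=
    .of_bound ((measurable_flowCorrelation hΦmeas hg₁ hg₂).comp
        (measurable_snd.sub measurable_fst)).aestronglyMeasurable
      (C * C) (ae_of_all _ fun p => abs_flowCorrelation_le hb₁ hb₂ _)
  simp only [intervalIntegral.integral_of_le hab]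
  calc ∫ x, (∫ s in Set.Ioc a b, g₁ (Φ s x)) * (∫ u in Set.Ioc a b, g₂ (Φ u x)) ∂μ
      = ∫ x, ∫ p, g₁ (Φ p.1 x) * g₂ (Φ p.2 x) ∂ν ∂μ := by
        congr 1; funext x; exact (integral_prod_mul _ _).symm
    _ = ∫ p, ∫ x, g₁ (Φ p.1 x) * g₂ (Φ p.2 x) ∂μ ∂ν := integral_integral_swap hint
    _ = ∫ p, flowCorrelation μ Φ g₁ g₂ (p.2 - p.1) ∂ν := by
        simp only [integral_comp_mul_comp_eq_flowCorrelation hΦadd hΦpres hg₁ hg₂]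
    _ = _ := integral_prod _ hint_corr

end Flow

theorem stmt1_general {X : Type*} [MeasurableSpace X]
    (μ : Measure X) [IsProbabilityMeasure μ]
    (Φ : ℝ → X → X)
    (hΦadd : ∀ t s x, Φ (t + s) x = Φ t (Φ s x))
    (hΦmeas : Measurable fun p : ℝ × X => Φ p.1 p.2)
    (hΦpres : ∀ t, MeasurePreserving (Φ t) μ μ)
    (g₁ g₂ : X → ℝ) (hg₁ : Measurable g₁) (hg₂ : Measurable g₂)
    (C : ℝ) (hb₁ : ∀ x, |g₁ x| ≤ C) (hb₂ : ∀ x, |g₂ x| ≤ C)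
    (L₁ L₂ : ℝ)
    (h₁ : Tendsto (fun T : ℝ =>
        (1 / T) * ∫ x, (∫ s in (0:ℝ)..T, g₁ (Φ s x)) * (∫ s in (0:ℝ)..T, g₂ (Φ s x)) ∂μ)
      atTop (nhds L₁))
    (h₂ : Tendsto (fun T : ℝ =>
        ∫ x, g₁ x * (∫ s in (-T/2)..(T/2), g₂ (Φ s x)) ∂μ) atTop (nhds L₂)) :
    L₁ = L₂ := by
  set ρ := flowCorrelation μ Φ g₁ g₂
  have hρ := intervalIntegrable_flowCorrelation (μ := μ) hΦmeas hg₁ hg₂ hb₁ hb₂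
  set R : ℝ → ℝ := fun t => ∫ r in -t..t, ρ r
  have hR_half : Tendsto (fun T => R (T / 2)) atTop (𝓝 L₂) := by
    refine h₂.congr fun T => ?_
    rw [integral_mul_intervalIntegral_comp_eq hΦmeas hg₁ hg₂ hb₁ hb₂, neg_div]
  have hR : Tendsto R atTop (𝓝 L₂) := by
    simpa [Function.comp_def] using hR_half.comp (tendsto_id.const_mul_atTop two_pos)
  have hR_avg : Tendsto (fun T => (1 / T) * ∫ t in (0 : ℝ)..T, R t) atTop (𝓝 L₂) := by
    simpa only [one_div, smul_eq_mul] using tendsto_inv_smul_intervalIntegral_of_tendsto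
      (continuous_intervalIntegral_neg_self hρ).intervalIntegrable hR
  refine tendsto_nhds_unique (h₁.congr' ?_) hR_avg
  filter_upwards [eventually_ge_atTop 0] with T hT
  rw [integral_intervalIntegral_mul_intervalIntegral_comp_eq hΦadd hΦmeas hΦpres hg₁ hg₂ hb₁ hb₂
    hT, intervalIntegral_intervalIntegral_comp_sub hρ]

/-- For a measure-preserving flow `Φ` on a probability space and bounded
measurable mean-zero `g₁, g₂`, the two formulations of the dynamical covariance agree:
if both limits exist then they are equal. -/
theorem stmt1 {X : Type*} [MeasurableSpace X]
    (μ : Measure X) [IsProbabilityMeasure μ]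
    (Φ : ℝ → X → X)
    (hΦ0 : ∀ x, Φ 0 x = x)
    (hΦadd : ∀ t s x, Φ (t + s) x = Φ t (Φ s x))
    (hΦmeas : Measurable fun p : ℝ × X => Φ p.1 p.2)
    (hΦpres : ∀ t, MeasurePreserving (Φ t) μ μ)
    (g₁ g₂ : X → ℝ) (hg₁ : Measurable g₁) (hg₂ : Measurable g₂)
    (C : ℝ) (hb₁ : ∀ x, |g₁ x| ≤ C) (hb₂ : ∀ x, |g₂ x| ≤ C)
    (hm₁ : ∫ x, g₁ x ∂μ = 0) (hm₂ : ∫ x, g₂ x ∂μ = 0)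
    (L₁ L₂ : ℝ)
    (h₁ : Tendsto (fun T : ℝ =>
        (1 / T) * ∫ x, (∫ s in (0:ℝ)..T, g₁ (Φ s x)) * (∫ s in (0:ℝ)..T, g₂ (Φ s x)) ∂μ)
      atTop (nhds L₁))
    (h₂ : Tendsto (fun T : ℝ =>
        ∫ x, g₁ x * (∫ s in (-T/2)..(T/2), g₂ (Φ s x)) ∂μ) atTop (nhds L₂)) :
    L₁ = L₂ :=
  stmt1_general μ Φ hΦadd hΦmeas hΦpres g₁ g₂ hg₁ hg₂ C hb₁ hb₂ L₁ L₂ h₁ h₂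
end

section
/- Let q: ℝ → ℂ be a bounded continuous function periodic with period L > 0. Then for every positive integer k, ∫_0^{kL} (e^{-2s}/(e^{-2kL} - 1) - e^{2s}/(e^{2kL} - 1)) · Re q(s) ds = ∫_0^L (e^{-2s}/(e^{-2L} - 1) - e^{2s}/(e^{2L} - 1)) · Re q(s) ds. -/
/-!
Since `q` is `L`-periodic, `g(s) = e^{cs} Re q(s)` satisfies `g(s + L) = e^{cL} g(s)`, so the integral
of `g` over `[0, kL]` is the geometric sum `1 + e^{cL} + ⋯ + e^{(k-1)cL} = (e^{ckL} - 1)/(e^{cL} - 1)`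
times its integral over `[0, L]`. Dividing by `e^{ckL} - 1` removes all dependence on `k`; apply this
with `c = -2` and `c = 2`.
-/

open Real Finset intervalIntegral MeasureTheory

section QuasiPeriodic

variable {E : Type*} [NormedAddCommGroup E] [NormedSpace ℝ E] {g : ℝ → E} {T r : ℝ}

theorem integral_add_period_of_add_eq_smul (hg : ∀ s, g (s + T) = r • g s) (a b : ℝ) :
    ∫ s in a + T..b + T, g s = r • ∫ s in a..b, g s := by
  rw [← integral_comp_add_right, ← intervalIntegral.integral_smul]
  simp only [hg]

theorem integral_nat_mul_period_of_add_eq_smul (hg : ∀ s, g (s + T) = r • g s)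
    (hint : ∀ a b, IntervalIntegrable g volume a b) (n : ℕ) :
    ∫ s in 0..n * T, g s = (∑ j ∈ range n, r ^ j) • ∫ s in 0..T, g s := by
  induction n with
  | zero => simp
  | succ n ih =>
    have hsplit : ∫ s in 0..(n + 1 : ℕ) * T, g s
        = (∫ s in 0..T, g s) + ∫ s in 0 + T..n * T + T, g s := by
      rw [zero_add, integral_add_adjacent_intervals (hint 0 T) (hint T (n * T + T))]
      push_cast
      ring_nf
    rw [hsplit, integral_add_period_of_add_eq_smul hg, ih, geom_sum_succ, smul_smul, add_smul,
      one_smul, add_comm]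

end QuasiPeriodic

theorem integral_exp_div_mul_of_periodic {f : ℝ → ℝ} {T : ℝ} (hf : Function.Periodic f T)
    (hint : ∀ a b, IntervalIntegrable f volume a b) {c : ℝ} (hcT : c * T ≠ 0)
    {n : ℕ} (hn : n ≠ 0) :
    ∫ s in 0..n * T, exp (c * s) / (exp (c * (n * T)) - 1) * f s
      = ∫ s in 0..T, exp (c * s) / (exp (c * T) - 1) * f s := by
  have hg : ∀ s, exp (c * (s + T)) * f (s + T) = exp (c * T) • (exp (c * s) * f s) := by
    intro s
    rw [hf, mul_add, exp_add, smul_eq_mul]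
    ring
  have hgint : ∀ a b, IntervalIntegrable (fun s => exp (c * s) * f s) volume a b :=
    fun a b => (hint a b).continuousOn_mul (by fun_prop)
  have hr : exp (c * T) ≠ 1 := (exp_eq_one_iff _).not.mpr hcT
  have hrn : exp (c * (n * T)) - 1 ≠ 0 := sub_ne_zero.mpr <| (exp_eq_one_iff _).not.mpr <| by
    rw [mul_left_comm]
    exact mul_ne_zero (Nat.cast_ne_zero.mpr hn) hcT
  simp only [div_mul_eq_mul_div, intervalIntegral.integral_div]
  rw [integral_nat_mul_period_of_add_eq_smul hg hgint,
    geom_sum_eq hr, ← exp_nat_mul, mul_left_comm (n : ℝ) c T, smul_eq_mul,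
    div_mul_eq_mul_div, div_div, mul_comm (exp (c * T) - 1), mul_div_mul_left _ _ hrn]

theorem stmt5_general (L : ℝ) (hL : 0 < L) (q : ℝ → ℂ) (hq : Continuous q)
    (hper : Function.Periodic q L)
    (k : ℕ) (hk : 1 ≤ k) :
    (∫ s in (0:ℝ)..((k : ℝ) * L),
        (Real.exp (-2 * s) / (Real.exp (-2 * ((k : ℝ) * L)) - 1)
          - Real.exp (2 * s) / (Real.exp (2 * ((k : ℝ) * L)) - 1)) * (q s).re)
      = ∫ s in (0:ℝ)..L,
        (Real.exp (-2 * s) / (Real.exp (-2 * L) - 1)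
          - Real.exp (2 * s) / (Real.exp (2 * L) - 1)) * (q s).re := by
  have hre_per : Function.Periodic (fun s => (q s).re) L := fun s => by simp only [hper s]
  have hre_int : ∀ a b, IntervalIntegrable (fun s => (q s).re) volume a b :=
    (Complex.continuous_re.comp hq).intervalIntegrable
  have hk0 : k ≠ 0 := by omega
  have hkernel (c : ℝ) (hc : c ≠ 0) :=
    integral_exp_div_mul_of_periodic hre_per hre_int (mul_ne_zero hc hL.ne') hk0
  have hcont (u v c D : ℝ) :
      IntervalIntegrable (fun s => exp (c * s) / D * (q s).re) volume u v :=
    (hre_int u v).continuousOn_mul (by fun_prop)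
  simp only [sub_mul]
  rw [integral_sub (hcont ..) (hcont ..), integral_sub (hcont ..) (hcont ..),
    hkernel (-2) (by norm_num), hkernel 2 (by norm_num)]

/-- For a bounded continuous `L`-periodic `q : ℝ → ℂ` and every positive
integer `k`, the winding-`k` Green's kernel integral over `[0, kL]` equals the
winding-`1` integral over `[0, L]`. -/
theorem stmt5 (L : ℝ) (hL : 0 < L) (q : ℝ → ℂ) (hq : Continuous q)
    (M : ℝ) (hqb : ∀ s, ‖q s‖ ≤ M) (hper : Function.Periodic q L)
    (k : ℕ) (hk : 1 ≤ k) :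
    (∫ s in (0:ℝ)..((k : ℝ) * L),
        (Real.exp (-2 * s) / (Real.exp (-2 * ((k : ℝ) * L)) - 1)
          - Real.exp (2 * s) / (Real.exp (2 * ((k : ℝ) * L)) - 1)) * (q s).re)
      = ∫ s in (0:ℝ)..L,
        (Real.exp (-2 * s) / (Real.exp (-2 * L) - 1)
          - Real.exp (2 * s) / (Real.exp (2 * L) - 1)) * (q s).re :=
  stmt5_general L hL q hq hper k hk
end

section
/- Let q: ℝ → ℂ be a bounded continuous L-periodic function with |Re q| ≤ M. Define for each positive integer k the quantity ψ_k = ∫_{-kL/2}^{kL/2} K_k(s) Re q(s) ds, where K_k(s) = e^{-2s}/(e^{-2kL}-1) - e^{2s}/(e^{2kL}-1) for 0 ≤ s ≤ kL/2 and the mirrored kernel for negative s. Then as k → ∞, ψ_k converges to -∫_0^∞ e^{-2s} Re q(s) ds - ∫_{-∞}^0 e^{2s} Re q(s) ds, and in fact ψ_k is constant in k, so ψ_1 equals this infinite integral. -/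
/-!
The kernel is minus the `kL`-periodisation of `e^{-2|s|}`, so every `ψ_k` equals
`-∫_ℝ e^{-2|s|} Re q(s) ds`. For a `T`-periodic `r` and `c > 0`, splitting `(0, ∞)` at `T` gives
the self-similarity `∫_{(0,∞)} e^{-cs} r = ∫_0^T e^{-cs} r + e^{-cT} ∫_{(0,∞)} e^{-cs} r`, and
shifting the two halves of `[-T/2, T/2]` by `±T` unfolds the kernel integral into the integrals
over one period on either side of `0`.
-/

open MeasureTheory Filter

/-- The winding-`k` symmetric kernel integral `ψ_k` around a closed geodesic of
length `L`: the kernel is `e^{-2|s|}/(e^{-2kL}-1) - e^{2|s|}/(e^{2kL}-1)` on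
`[-kL/2, kL/2]` (which agrees with the stated kernel for `s ≥ 0` and its mirror
for `s < 0`). -/
noncomputable def psiK (L : ℝ) (q : ℝ → ℂ) (k : ℕ) : ℝ :=
  ∫ s in (-((k : ℝ) * L) / 2)..((k : ℝ) * L / 2),
    (Real.exp (-2 * |s|) / (Real.exp (-2 * ((k : ℝ) * L)) - 1)
      - Real.exp (2 * |s|) / (Real.exp (2 * ((k : ℝ) * L)) - 1)) * (q s).re

open Set Real intervalIntegral

theorem integral_Ioi_eq_div_of_add_eq_mul {f : ℝ → ℝ} {T ρ : ℝ} (hT : 0 ≤ T) (hρ : ρ ≠ 1)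
    (hf : IntegrableOn f (Ioi 0)) (hshift : ∀ s, f (s + T) = ρ * f s) :
    ∫ s in Ioi 0, f s = (∫ s in 0..T, f s) / (1 - ρ) := by
  have htail : ∫ s in Ioi T, f s = ρ * ∫ s in Ioi 0, f s := by
    rw [← (measurePreserving_add_right volume T).setIntegral_preimage_emb
      (measurableEmbedding_addRight T), preimage_add_const_Ioi, sub_self]
    simp only [hshift, MeasureTheory.integral_const_mul]
  have hsplit : ∫ s in Ioi 0, f s = (∫ s in 0..T, f s) + ∫ s in Ioi T, f s := by
    rw [integral_of_le hT, ← setIntegral_union Ioc_disjoint_Ioi_same measurableSet_Ioi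
      (hf.mono_set Ioc_subset_Ioi_self) (hf.mono_set (Ioi_subset_Ioi hT)),
      Ioc_union_Ioi_eq_Ioi hT]
  rw [eq_div_iff (sub_ne_zero.2 hρ.symm)]
  linarith

theorem integrableOn_exp_neg_mul_mul_Ioi {r : ℝ → ℝ} {c C : ℝ} (a : ℝ) (hc : 0 < c)
    (hr : AEStronglyMeasurable r) (hb : ∀ s, |r s| ≤ C) :
    IntegrableOn (fun s => exp (-c * s) * r s) (Ioi a) :=
  (exp_neg_integrableOn_Ioi a hc).mul_bdd hr.restrict (ae_of_all _ hb)

theorem exp_div_sub_exp_div_eq {c T : ℝ} (hcT : c * T ≠ 0) (u : ℝ) :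
    exp (-c * u) / (exp (-c * T) - 1) - exp (c * u) / (exp (c * T) - 1)
      = (exp (-c * u) + exp (c * (u - T))) / (exp (-c * T) - 1) := by
  have hy : exp (c * T) ≠ 1 := by simpa using hcT
  have hy₀ : exp (c * T) ≠ 0 := (exp_pos _).ne'
  rw [show c * (u - T) = c * u + -(c * T) by ring, exp_add, neg_mul c T, exp_neg]
  generalize exp (-c * u) = a, exp (c * u) = b, exp (c * T) = y at *
  have hy₁ : y - 1 ≠ 0 := sub_ne_zero.2 hy
  field_simp
  ring

namespace Function.Periodic

variable {r : ℝ → ℝ} {T c : ℝ}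

theorem integral_Ioi_exp_neg_mul (hc : 0 < c) (hT : 0 < T) (hr : Continuous r)
    (hp : Periodic r T) :
    ∫ s in Ioi 0, exp (-c * s) * r s
      = (∫ s in 0..T, exp (-c * s) * r s) / (1 - exp (-c * T)) := by
  obtain ⟨C, hC⟩ := (hp.isBounded_of_continuous hT.ne' hr).exists_norm_le
  refine integral_Ioi_eq_div_of_add_eq_mul hT.le ?_
    (integrableOn_exp_neg_mul_mul_Ioi 0 hc hr.aestronglyMeasurable
      fun s => hC _ (mem_range_self s)) fun s => ?_
  · exact (exp_lt_one_iff.2 (by nlinarith)).ne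
  · rw [hp s, mul_add, exp_add]
    ring

theorem integral_Iio_exp_mul (hc : 0 < c) (hT : 0 < T) (hr : Continuous r)
    (hp : Periodic r T) :
    ∫ s in Iio 0, exp (c * s) * r s
      = (∫ s in (-T)..0, exp (c * s) * r s) / (1 - exp (-c * T)) := by
  have hp' : Periodic (fun s => r (-s)) T := fun s => by
    simpa [add_comm] using hp.neg (-s)
  have hreflect := integral_comp_neg_Ioi 0 fun s => exp (c * s) * r s
  have hreflect' := integral_comp_neg (a := 0) (b := T) fun s => exp (c * s) * r s
  simp only [neg_zero, mul_neg, ← neg_mul] at hreflect hreflect'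
  rw [setIntegral_congr_set Iio_ae_eq_Iic, ← hreflect, ← hreflect',
    hp'.integral_Ioi_exp_neg_mul hc hT (by fun_prop)]

theorem integral_exp_abs_fold (hT : 0 ≤ T) (hr : Continuous r) (hp : Periodic r T) :
    ∫ s in (-T/2)..(T/2), (exp (-c * |s|) + exp (c * (|s| - T))) * r s
      = (∫ s in 0..T, exp (-c * s) * r s) + ∫ s in (-T)..0, exp (c * s) * r s := by
  set f : ℝ → ℝ := fun s => exp (-c * s) * r s
  set g : ℝ → ℝ := fun s => exp (c * s) * r s
  have hf : Continuous f := by fun_prop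
  have hg : Continuous g := by fun_prop
  have hright : ∫ s in (0:ℝ)..(T/2), (exp (-c * |s|) + exp (c * (|s| - T))) * r s
      = (∫ s in (0:ℝ)..(T/2), f s) + ∫ s in (-T)..(-T/2), g s := by
    rw [integral_congr (g := fun s => f s + g (s - T)) fun s hs => ?_,
      integral_add (hf.intervalIntegrable _ _) (Continuous.intervalIntegrable (by fun_prop) _ _),
      integral_comp_sub_right, zero_sub, show T / 2 - T = -T / 2 by ring]
    rw [uIcc_of_le (by linarith)] at hs
    simp only [f, g, abs_of_nonneg hs.1, hp.sub_eq]
    ring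
  have hleft : ∫ s in (-T/2)..0, (exp (-c * |s|) + exp (c * (|s| - T))) * r s
      = (∫ s in (-T/2)..0, g s) + ∫ s in (T/2)..T, f s := by
    rw [integral_congr (g := fun s => g s + f (s + T)) fun s hs => ?_,
      integral_add (hg.intervalIntegrable _ _) (Continuous.intervalIntegrable (by fun_prop) _ _),
      integral_comp_add_right, zero_add, show -T / 2 + T = T / 2 by ring]
    rw [uIcc_of_le (by linarith)] at hs
    simp only [f, g, abs_of_nonpos hs.2, hp s]
    rw [show -c * -s = c * s by ring, show c * (-s - T) = -c * (s + T) by ring]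
    ring
  rw [← integral_add_adjacent_intervals (b := 0) (Continuous.intervalIntegrable (by fun_prop) _ _)
      (Continuous.intervalIntegrable (by fun_prop) _ _), hleft, hright,
    ← integral_add_adjacent_intervals (a := 0) (b := T/2) (c := T) (hf.intervalIntegrable _ _)
      (hf.intervalIntegrable _ _),
    ← integral_add_adjacent_intervals (a := -T) (b := -T/2) (c := 0) (hg.intervalIntegrable _ _)
      (hg.intervalIntegrable _ _)]
  ring

theorem integral_exp_kernel (hc : c ≠ 0) (hT : 0 < T) (hr : Continuous r) (hp : Periodic r T) :
    ∫ s in (-T/2)..(T/2),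
        (exp (-c * |s|) / (exp (-c * T) - 1) - exp (c * |s|) / (exp (c * T) - 1)) * r s
      = -((∫ s in 0..T, exp (-c * s) * r s) + ∫ s in (-T)..0, exp (c * s) * r s)
          / (1 - exp (-c * T)) := by
  simp_rw [exp_div_sub_exp_div_eq (mul_ne_zero hc hT.ne'), div_mul_eq_mul_div,
    intervalIntegral.integral_div]
  rw [hp.integral_exp_abs_fold hT.le hr, ← neg_div_neg_eq, neg_sub]

end Function.Periodic

theorem stmt6_general (L : ℝ) (hL : 0 < L) (q : ℝ → ℂ) (hq : Continuous q)
    (hper : Function.Periodic q L) :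
    Tendsto (fun k : ℕ => psiK L q k) atTop
      (nhds (-(∫ s in Set.Ioi (0:ℝ), Real.exp (-2 * s) * (q s).re)
        - ∫ s in Set.Iio (0:ℝ), Real.exp (2 * s) * (q s).re)) ∧
    (∀ k : ℕ, 1 ≤ k → psiK L q k = psiK L q 1) ∧
    psiK L q 1 = -(∫ s in Set.Ioi (0:ℝ), Real.exp (-2 * s) * (q s).re)
        - ∫ s in Set.Iio (0:ℝ), Real.exp (2 * s) * (q s).re := by
  have hψ : ∀ k : ℕ, 1 ≤ k → psiK L q k = -(∫ s in Ioi 0, exp (-2 * s) * (q s).re)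
      - ∫ s in Iio 0, exp (2 * s) * (q s).re := by
    intro k hk
    have hT : 0 < (k : ℝ) * L := mul_pos (by exact_mod_cast hk) hL
    have hr : Continuous fun s => (q s).re := by fun_prop
    have hp : Function.Periodic (fun s => (q s).re) (k * L) := (hper.nat_mul k).comp Complex.re
    rw [psiK, hp.integral_exp_kernel two_ne_zero hT hr,
      hp.integral_Ioi_exp_neg_mul two_pos hT hr, hp.integral_Iio_exp_mul two_pos hT hr]
    ring
  exact ⟨tendsto_const_nhds.congr' (eventually_atTop.2 ⟨1, fun k hk => (hψ k hk).symm⟩),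
    fun k hk => by rw [hψ k hk, hψ 1 le_rfl], hψ 1 le_rfl⟩

/-- For bounded continuous `L`-periodic `q`, the quantities `ψ_k`
converge as `k → ∞` to `-∫₀^∞ e^{-2s} Re q - ∫_{-∞}^0 e^{2s} Re q`; moreover `ψ_k`
is constant in `k ≥ 1`, so `ψ_1` equals this improper integral. -/
theorem stmt6 (L : ℝ) (hL : 0 < L) (q : ℝ → ℂ) (hq : Continuous q)
    (M : ℝ) (hqb : ∀ s, |(q s).re| ≤ M) (hper : Function.Periodic q L) :
    Tendsto (fun k : ℕ => psiK L q k) atTop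
      (nhds (-(∫ s in Set.Ioi (0:ℝ), Real.exp (-2 * s) * (q s).re)
        - ∫ s in Set.Iio (0:ℝ), Real.exp (2 * s) * (q s).re)) ∧
    (∀ k : ℕ, 1 ≤ k → psiK L q k = psiK L q 1) ∧
    psiK L q 1 = -(∫ s in Set.Ioi (0:ℝ), Real.exp (-2 * s) * (q s).re)
        - ∫ s in Set.Iio (0:ℝ), Real.exp (2 * s) * (q s).re :=
  stmt6_general L hL q hq hper
end

section
/- Suppose (A_n)_{n≥0} and (B_n)_{n≥0} are real sequences satisfying: (1) Σ_{n≥0} (A_n + B_n) T^{2n+3} (1-T²)^6 = -B₀ T³ (1-T²)³ as formal power series (equivalently, for all T in a neighborhood of 0 where the series converge absolutely), and (2) 2^{n+3} B_n + Σ_{k=0}^n (n-k+1)(n-k+2) 2^{k-1} A_k = 0 for all n ≥ 0. Then A_n = B_n = 0 for all n ≥ 0. -/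
/-!
Dividing (1) by `T³(1 - T²)⁶` and expanding `(1 - y)⁻³ = ∑ C(n+2, 2) yⁿ` shows that the power
series `∑ (Aₙ + Bₙ + C(n+2, 2) B₀) yⁿ` vanishes for small `y = T² > 0`; by the identity theorem
all its coefficients vanish. At `n = 0` this reads `A₀ + 2B₀ = 0`, while (2) at `n = 0` reads
`8B₀ + A₀ = 0`, so `A₀ = B₀ = 0` and hence `Aₙ + Bₙ = 0` for all `n`. Substituting `Bₙ = -Aₙ`
into (2) leaves a lower triangular system in the `Aₖ` with diagonal `2ⁿ - 2ⁿ⁺³ = -7 · 2ⁿ ≠ 0`.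
-/

open Filter Topology

theorem eq_zero_of_eventually_hasSum_mul_pow_eq_zero {D : ℕ → ℝ}
    (h : ∀ᶠ y in 𝓝[>] (0 : ℝ), HasSum (fun n => D n * y ^ n) 0) : D = 0 := by
  set p := FormalMultilinearSeries.ofScalars ℝ D
  obtain ⟨y, hy, hy0 : 0 < y⟩ := (h.and self_mem_nhdsWithin).exists
  lift y to NNReal using hy0.le
  have hradius : (y : ENNReal) ≤ p.radius := by
    refine p.le_radius_of_summable (hy.summable.abs.congr fun n => ?_)
    simp [p, abs_of_pos hy0]
  have hp := p.hasFPowerSeriesOnBall (hradius.trans_lt' (ENNReal.coe_pos.2 (mod_cast hy0)))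
  have hsum : ∀ᶠ z in 𝓝[>] (0 : ℝ), p.sum z = 0 := by
    filter_upwards [h] with z hz
    exact (FormalMultilinearSeries.ofScalars_sum_eq D z).trans hz.tsum_eq
  have hfreq : ∃ᶠ z in 𝓝[≠] (0 : ℝ), p.sum z = 0 :=
    hsum.frequently.filter_mono (nhdsWithin_mono 0 fun z hz => ne_of_gt hz)
  exact (FormalMultilinearSeries.ofScalars_series_eq_zero ℝ).1 <|
    hp.hasFPowerSeriesAt.eq_zero_of_eventually
      (hp.analyticAt.frequently_zero_iff_eventually_zero.1 hfreq)

theorem hasSum_add_choose_mul_sq_pow {c : ℕ → ℝ} {b T : ℝ} (hT0 : T ≠ 0) (hT1 : |T| < 1)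
    (h : HasSum (fun n => c n * T ^ (2 * n + 3) * (1 - T ^ 2) ^ 6)
      (-b * T ^ 3 * (1 - T ^ 2) ^ 3)) :
    HasSum (fun n => (c n + b * (n + 2).choose 2) * (T ^ 2) ^ n) 0 := by
  have hTsq : T ^ 2 < 1 := (sq_lt_one_iff_abs_lt_one T).2 hT1
  have h1T : 1 - T ^ 2 ≠ 0 := (sub_pos.2 hTsq).ne'
  have hgeom : HasSum (fun n => ((n + 2).choose 2 : ℝ) * (T ^ 2) ^ n) (1 / (1 - T ^ 2) ^ 3) :=
    hasSum_choose_mul_geometric_of_norm_lt_one 2 (by rwa [Real.norm_of_nonneg (sq_nonneg T)])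
  have key := (h.div_const (T ^ 3 * (1 - T ^ 2) ^ 6)).add (hgeom.mul_left b)
  rw [show -b * T ^ 3 * (1 - T ^ 2) ^ 3 / (T ^ 3 * (1 - T ^ 2) ^ 6) + b * (1 / (1 - T ^ 2) ^ 3)
    = 0 by field_simp; ring] at key
  exact key.congr_fun fun n => by field_simp; ring

theorem eq_zero_of_lower_triangular {A d : ℕ → ℝ} {w : ℕ → ℕ → ℝ} (hd : ∀ n, d n ≠ 0)
    (h : ∀ n, d n * A n + ∑ k ∈ Finset.range n, w n k * A k = 0) (n : ℕ) : A n = 0 := by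
  induction n using Nat.strong_induction_on with
  | _ n ih =>
    have hsum : ∑ k ∈ Finset.range n, w n k * A k = 0 :=
      Finset.sum_eq_zero fun k hk => by rw [ih k (Finset.mem_range.1 hk), mul_zero]
    simpa [hsum, hd n] using h n

/-- If real sequences `(Aₙ), (Bₙ)` satisfy (1) the power-series
identity `Σₙ (Aₙ + Bₙ) T^{2n+3}(1-T²)⁶ = -B₀ T³ (1-T²)³` for all `T` in a
neighborhood of `0` (where the series converges), and (2) the relations
`2^{n+3} Bₙ + Σ_{k=0}^n (n-k+1)(n-k+2) 2^{k-1} Aₖ = 0` for all `n ≥ 0`, then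
`Aₙ = Bₙ = 0` for all `n`. -/
theorem stmt15 (A B : ℕ → ℝ) (ε : ℝ) (hε : 0 < ε)
    (h1 : ∀ T : ℝ, |T| < ε →
      HasSum (fun n : ℕ => (A n + B n) * T ^ (2 * n + 3) * (1 - T ^ 2) ^ 6)
        (-(B 0) * T ^ 3 * (1 - T ^ 2) ^ 3))
    (h2 : ∀ n : ℕ, 2 ^ (n + 3) * B n
        + ∑ k ∈ Finset.range (n + 1),
            ((n - k + 1 : ℕ) : ℝ) * ((n - k + 2 : ℕ) : ℝ) * ((2 : ℝ) ^ k / 2) * A k = 0) :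
    ∀ n, A n = 0 ∧ B n = 0 := by
  have hcoeff : ∀ n, A n + B n + B 0 * (n + 2).choose 2 = 0 := by
    refine congrFun (eq_zero_of_eventually_hasSum_mul_pow_eq_zero ?_)
    filter_upwards [Ioo_mem_nhdsGT (by positivity : (0 : ℝ) < min ε 1 ^ 2)] with y ⟨hy0, hy⟩
    have hT : |√y| < min ε 1 := by
      rwa [abs_of_nonneg (Real.sqrt_nonneg y), Real.sqrt_lt' (by positivity)]
    rw [← Real.sq_sqrt hy0.le]
    exact hasSum_add_choose_mul_sq_pow (Real.sqrt_ne_zero'.2 hy0) (hT.trans_le (min_le_right _ _))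
      (h1 _ (hT.trans_le (min_le_left _ _)))
  have hB0 : B 0 = 0 := by
    have h20 := h2 0
    have hc0 := hcoeff 0
    norm_num at h20 hc0
    linarith
  have hAB : ∀ n, A n + B n = 0 := by simpa [hB0] using hcoeff
  have hA : ∀ n, A n = 0 := by
    refine eq_zero_of_lower_triangular (d := fun n => -7 * 2 ^ n)
      (w := fun n k => ((n - k + 1 : ℕ) : ℝ) * ((n - k + 2 : ℕ) : ℝ) * ((2 : ℝ) ^ k / 2))
      (fun n => by positivity) fun n => ?_
    have h2n := h2 n
    rw [Finset.sum_range_succ, Nat.sub_self] at h2n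
    linear_combination h2n - 2 ^ (n + 3) * hAB n
  exact fun n => ⟨hA n, by linarith [hAB n, hA n]⟩
end
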